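/- arXiv:2305.00500 — 7 statements merged into one kernel-verified Lean document; each statement's English description precedes it below -/
import Mathlib

section
/- Let X and Y be Banach spaces and let A ⊆ X × Y be a closed linear relation. The following assertions are equivalent: (i) there exists α > 0 such that α‖x‖ ≤ ‖y‖ for all (x,y) ∈ A; (ii) ker A = {0} and ran A is closed in Y; (iii) ran A is closed and there exists a bounded linear operator Q : ran A → X such that A⁻¹ = {(y, Qy) : y ∈ ran A}. -/
open Filter Topology

set_option maxHeartbeats 1000000

/-- A (linear) relation from `X` to `Y` is a linear subspace `A` of `X × Y`.
`A⁻¹` is the graph of a bounded operator `Q` on `ran A` iff `ran A` is closed and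
`ker A = {0}`, iff `A` satisfies a lower bound `α‖x‖ ≤ ‖y‖`. -/
theorem stmt_0 {𝕜 : Type*} [RCLike 𝕜]
    {X Y : Type*} [NormedAddCommGroup X] [NormedSpace 𝕜 X] [CompleteSpace X]
    [NormedAddCommGroup Y] [NormedSpace 𝕜 Y] [CompleteSpace Y]
    (A : Submodule 𝕜 (X × Y)) (hA : IsClosed (A : Set (X × Y))) :
    List.TFAE
      [ -- (i) there exists α > 0 with α‖x‖ ≤ ‖y‖ for all (x,y) ∈ A
        ∃ α : ℝ, 0 < α ∧ ∀ p ∈ A, α * ‖p.1‖ ≤ ‖p.2‖,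
        -- (ii) ker A = {0} and ran A is closed
        (∀ x : X, (x, (0 : Y)) ∈ A → x = 0) ∧ IsClosed {y : Y | ∃ x, (x, y) ∈ A},
        -- (iii) ran A is closed and A⁻¹ is the graph of a bounded operator Q : ran A → X
        IsClosed {y : Y | ∃ x, (x, y) ∈ A} ∧
          ∃ Q : (A.map (LinearMap.snd 𝕜 X Y)) →L[𝕜] X,
            ∀ (x : X) (y : Y),
              (x, y) ∈ A ↔ ∃ hy : y ∈ A.map (LinearMap.snd 𝕜 X Y), x = Q ⟨y, hy⟩ ] := by
  set R := A.map (LinearMap.snd 𝕜 X Y) with hR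
  have hmemR : ∀ y : Y, y ∈ R ↔ ∃ x, (x, y) ∈ A := by
    intro y
    simp only [hR, Submodule.mem_map, LinearMap.snd_apply]
    constructor
    · rintro ⟨⟨x, y'⟩, hp, rfl⟩; exact ⟨x, hp⟩
    · rintro ⟨x, hx⟩; exact ⟨(x, y), hx, rfl⟩
  have hSeq : {y : Y | ∃ x, (x, y) ∈ A} = (R : Set Y) := by
    ext y; simp [hmemR]
  tfae_have 1 → 2
  | ⟨α, hα, hb⟩ => by
    constructor
    · intro x hx
      have h := hb (x, 0) hx
      simp only [norm_zero] at h
      have : ‖x‖ ≤ 0 := by nlinarith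
      simpa using le_antisymm this (norm_nonneg x)
    · haveI : CompleteSpace A := hA.completeSpace_coe
      set f : A → Y := fun p => (p : X × Y).2 with hf
      have hlip : LipschitzWith 1 f := by
        apply LipschitzWith.of_dist_le_mul
        intro p q
        rw [NNReal.coe_one, one_mul, Subtype.dist_eq, Prod.dist_eq]
        exact le_max_right _ _
      have hKpos : (0:ℝ) ≤ max α⁻¹ 1 := le_trans zero_le_one (le_max_right _ _)
      have hanti : AntilipschitzWith ⟨max α⁻¹ 1, hKpos⟩ f := by
        apply AntilipschitzWith.of_le_mul_dist
        intro p q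
        have hd : ((p : X × Y) - (q : X × Y)) ∈ A := sub_mem p.2 q.2
        have hb' := hb _ hd
        rw [Subtype.dist_eq, Prod.dist_eq, dist_eq_norm, dist_eq_norm]
        have h2 : ‖(p : X × Y).2 - (q : X × Y).2‖ = ‖((p : X × Y) - (q : X × Y)).2‖ := rfl
        have h1 : ‖(p : X × Y).1 - (q : X × Y).1‖ = ‖((p : X × Y) - (q : X × Y)).1‖ := rfl
        rw [h1, h2]
        set u := ‖((p : X × Y) - (q : X × Y)).1‖
        set v := ‖((p : X × Y) - (q : X × Y)).2‖
        have hv : (0:ℝ) ≤ v := norm_nonneg _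
        have hu : u ≤ α⁻¹ * v := by
          rw [inv_mul_eq_div, le_div_iff₀ hα, mul_comm]; exact hb'
        apply max_le
        · exact le_trans hu (mul_le_mul_of_nonneg_right (le_max_left _ _) hv)
        · calc v = 1 * v := (one_mul v).symm
            _ ≤ max α⁻¹ 1 * v := mul_le_mul_of_nonneg_right (le_max_right _ _) hv
      have hrange : Set.range f = {y : Y | ∃ x, (x, y) ∈ A} := by
        ext y
        constructor
        · rintro ⟨⟨⟨x, y'⟩, hp⟩, rfl⟩; exact ⟨x, hp⟩
        · rintro ⟨x, hx⟩; exact ⟨⟨(x, y), hx⟩, rfl⟩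
      rw [← hrange]
      exact hanti.isClosed_range hlip.uniformContinuous
  tfae_have 2 → 3
  | ⟨hker, hcl⟩ => by
    refine ⟨hcl, ?_⟩
    have huniq : ∀ (x x' : X) (y : Y), (x, y) ∈ A → (x', y) ∈ A → x = x' := by
      intro x x' y h h'
      have hd : ((x, y) - (x', y)) ∈ A := sub_mem h h'
      have h0 : (x - x', (0:Y)) ∈ A := by simpa using hd
      exact sub_eq_zero.mp (hker _ h0)
    have hex : ∀ y : R, ∃ x, (x, (y : Y)) ∈ A := fun y => (hmemR y).mp y.2
    choose g hg using hex
    let f : R →ₗ[𝕜] X :=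
      { toFun := g
        map_add' := fun a b => huniq _ _ _ (hg (a + b))
          (by simpa using add_mem (hg a) (hg b))
        map_smul' := fun c a => huniq _ _ _ (hg (c • a))
          (by simpa using A.smul_mem c (hg a)) }
    haveI : CompleteSpace R := (hSeq ▸ hcl : IsClosed (R : Set Y)).completeSpace_coe
    have hgraph : (f.graph : Set (↥R × X)) =
        (fun p : ↥R × X => (p.2, (p.1 : Y))) ⁻¹' (A : Set (X × Y)) := by
      ext ⟨a, x⟩
      simp only [Set.mem_preimage, SetLike.mem_coe, LinearMap.mem_graph_iff]
      constructor
      · rintro rfl; exact hg a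
      · intro h; exact huniq _ _ _ h (hg a)
    have hcont : Continuous f := f.continuous_of_isClosed_graph
      (by rw [hgraph]
          exact hA.preimage (continuous_snd.prodMk (continuous_subtype_val.comp continuous_fst)))
    refine ⟨⟨f, hcont⟩, ?_⟩
    intro x y
    constructor
    · intro h
      have hy : y ∈ R := (hmemR y).mpr ⟨x, h⟩
      exact ⟨hy, huniq _ _ _ h (hg ⟨y, hy⟩)⟩
    · rintro ⟨hy, rfl⟩
      exact hg ⟨y, hy⟩
  tfae_have 3 → 1
  | ⟨hcl, Q, hQ⟩ => by
    refine ⟨(‖Q‖ + 1)⁻¹, by positivity, ?_⟩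
    rintro ⟨x, y⟩ hp
    obtain ⟨hy, hxQ⟩ := (hQ x y).mp hp
    have h1 : ‖x‖ ≤ ‖Q‖ * ‖y‖ := by
      rw [hxQ]
      calc ‖Q ⟨y, hy⟩‖ ≤ ‖Q‖ * ‖(⟨y, hy⟩ : R)‖ := Q.le_opNorm _
      _ = ‖Q‖ * ‖y‖ := rfl
    have hQ0 : (0:ℝ) ≤ ‖Q‖ := Q.opNorm_nonneg
    have hy0 : (0:ℝ) ≤ ‖y‖ := norm_nonneg _
    rw [inv_mul_le_iff₀ (by positivity)]
    nlinarith [norm_nonneg x]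
  tfae_finish
end

section
/- Let X and Y be Banach spaces and let A ⊆ X × Y be a closed linear relation with ran A = Y. Then there exists α > 0 such that for every bounded linear operator B : X → Y with ‖B‖ < α one has ran(A + B) = Y, where A + B := {(x, y + Bx) : (x,y) ∈ A}. -/
/-!
Viewing `A` as a Banach space, the second projection `A → Y` is onto, so by the open mapping
theorem it has a bounded nonlinear right inverse, of norm `N` say. Adding `B` amounts to adding
the operator `(x, y) ↦ B x`, of norm at most `‖B‖`, to that projection, and a map within
Lipschitz distance `c < N⁻¹` of a linear map with such a right inverse is still onto
(by the iteration behind `surjOn_closedBall_of_nonlinearRightInverse`). So `α = N⁻¹` works.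
-/

open Function Metric

namespace ApproximatesLinearOn

variable {𝕜 : Type*} [NontriviallyNormedField 𝕜]
  {E F : Type*} [NormedAddCommGroup E] [NormedSpace 𝕜 E] [CompleteSpace E]
  [NormedAddCommGroup F] [NormedSpace 𝕜 F]

theorem surjective_of_nonlinearRightInverse {f : E → F} {f' : E →L[𝕜] F} {c : NNReal}
    (hf : ApproximatesLinearOn f f' Set.univ c) (f'symm : f'.NonlinearRightInverse)
    (hc : (c : ℝ) < (f'symm.nnnorm : ℝ)⁻¹) : Surjective f := by
  intro y
  have hgap : 0 < (f'symm.nnnorm : ℝ)⁻¹ - c := sub_pos.2 hc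
  set ε := dist y (f 0) / ((f'symm.nnnorm : ℝ)⁻¹ - c)
  have hy : y ∈ closedBall (f 0) (((f'symm.nnnorm : ℝ)⁻¹ - c) * ε) := by
    rw [mem_closedBall, mul_div_cancel₀ _ hgap.ne']
  obtain ⟨x, -, hx⟩ := hf.surjOn_closedBall_of_nonlinearRightInverse f'symm
    (by positivity) (Set.subset_univ _) hy
  exact ⟨x, hx⟩

end ApproximatesLinearOn

namespace ContinuousLinearMap

variable {𝕜 : Type*} [NontriviallyNormedField 𝕜]
  {E F : Type*} [NormedAddCommGroup E] [NormedSpace 𝕜 E] [CompleteSpace E]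
  [NormedAddCommGroup F] [NormedSpace 𝕜 F] [CompleteSpace F]

theorem exists_pos_forall_norm_lt_surjective_add {f : E →L[𝕜] F} (hf : Surjective f) :
    ∃ α : ℝ, 0 < α ∧ ∀ g : E →L[𝕜] F, ‖g‖ < α → Surjective (f + g) := by
  have hrange : f.range = ⊤ := LinearMap.range_eq_top.2 hf
  set fsymm := f.nonlinearRightInverseOfSurjective hrange
  refine ⟨(fsymm.nnnorm : ℝ)⁻¹,
    inv_pos.2 (f.nonlinearRightInverseOfSurjective_nnnorm_pos hrange), fun g hg => ?_⟩
  have happrox : ApproximatesLinearOn (⇑(f + g)) f Set.univ ‖g‖₊ :=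
    LipschitzOnWith.approximatesLinearOn (by simpa using g.lipschitz)
  exact happrox.surjective_of_nonlinearRightInverse fsymm hg

end ContinuousLinearMap

/-- Surjectivity of a closed relation is stable under small bounded perturbations:
if `A ⊆ X × Y` is a closed relation with `ran A = Y`, then there is `α > 0` such that
for every `B ∈ ℒ(X,Y)` with `‖B‖ < α`, the relation `A + B = {(x, y + Bx) : (x,y) ∈ A}`
is surjective. -/
theorem stmt_4 {𝕜 : Type*} [RCLike 𝕜]
    {X Y : Type*} [NormedAddCommGroup X] [NormedSpace 𝕜 X] [CompleteSpace X]
    [NormedAddCommGroup Y] [NormedSpace 𝕜 Y] [CompleteSpace Y]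
    (A : Submodule 𝕜 (X × Y)) (hA : IsClosed (A : Set (X × Y)))
    (hsurj : ∀ y : Y, ∃ x, (x, y) ∈ A) :
    ∃ α : ℝ, 0 < α ∧ ∀ B : X →L[𝕜] Y, ‖B‖ < α →
      ∀ v : Y, ∃ p ∈ A, v = p.2 + B p.1 := by
  have : CompleteSpace A := hA.completeSpace_coe
  set fst : A →L[𝕜] X := (ContinuousLinearMap.fst 𝕜 X Y).comp A.subtypeL
  set snd : A →L[𝕜] Y := (ContinuousLinearMap.snd 𝕜 X Y).comp A.subtypeL
  have hsnd : Surjective snd := fun y =>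
    let ⟨x, hx⟩ := hsurj y
    ⟨⟨(x, y), hx⟩, rfl⟩
  have hfst : ‖fst‖ ≤ 1 :=
    (ContinuousLinearMap.opNorm_comp_le _ _).trans <|
      mul_le_one₀ (ContinuousLinearMap.norm_fst_le 𝕜 X Y) (norm_nonneg _)
        (Submodule.norm_subtypeL_le A)
  obtain ⟨α, hα, hperturb⟩ := ContinuousLinearMap.exists_pos_forall_norm_lt_surjective_add hsnd
  refine ⟨α, hα, fun B hB v => ?_⟩
  have hBfst : ‖B.comp fst‖ < α :=
    ((B.opNorm_comp_le fst).trans (mul_le_of_le_one_right (norm_nonneg B) hfst)).trans_lt hB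
  obtain ⟨p, hp⟩ := hperturb (B.comp fst) hBfst v
  exact ⟨p, p.2, hp.symm⟩
end

section
/- Let X be a Banach space, Ω ⊆ 𝕂 a non-empty set, and R : Ω → ℒ(X) a pseudo-resolvent, i.e. R(λ) − R(μ) = (μ − λ) R(λ) R(μ) for all λ, μ ∈ Ω. Then there exists a unique relation A ⊆ X × X such that Ω ⊆ ρ(A) and R(λ) = R(λ,A) for all λ ∈ Ω. -/
open Filter Topology

/-- `Q ∈ ℒ(X)` is the resolvent of the relation `A ⊆ X × X` at `l`, i.e. the relation
`l - A = {(x, l•x - y) : (x,y) ∈ A}` is invertible and `(l - A)⁻¹` is the graph of `Q`.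
(In particular `l` belongs to the resolvent set `ρ(A)`.) -/
def IsResolventOf {𝕜 X : Type*} [RCLike 𝕜] [NormedAddCommGroup X] [NormedSpace 𝕜 X]
    (A : Submodule 𝕜 (X × X)) (l : 𝕜) (Q : X →L[𝕜] X) : Prop :=
  ∀ u x : X, (∃ y, (x, y) ∈ A ∧ u = l • x - y) ↔ x = Q u

/-- Key algebraic lemma from the pseudo-resolvent identity. -/
lemma key_lemma {𝕜 X : Type*} [RCLike 𝕜] [NormedAddCommGroup X] [NormedSpace 𝕜 X]
    (l l₀ : 𝕜) (R : 𝕜 → X →L[𝕜] X)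
    (h1 : R l - R l₀ = (l₀ - l) • (R l ∘L R l₀))
    (h2 : R l₀ - R l = (l - l₀) • (R l₀ ∘L R l))
    (u x : X) : x = R l₀ ((l₀ - l) • x + u) ↔ x = R l u := by
  constructor
  · intro hx
    have e1 := congrFun (congrArg DFunLike.coe h1) ((l₀ - l) • x + u)
    simp only [ContinuousLinearMap.sub_apply, ContinuousLinearMap.smul_apply,
      ContinuousLinearMap.comp_apply] at e1
    rw [← hx] at e1
    have e2 : R l ((l₀ - l) • x + u) = (l₀ - l) • R l x + R l u := by
      rw [map_add, map_smul]
    linear_combination (norm := module) e2 - e1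
  · intro hx
    subst hx
    have e := congrFun (congrArg DFunLike.coe h2) u
    simp only [ContinuousLinearMap.sub_apply, ContinuousLinearMap.smul_apply,
      ContinuousLinearMap.comp_apply] at e
    rw [map_add, map_smul]
    linear_combination (norm := module) -e

/-- Every pseudo-resolvent `R : Ω → ℒ(X)` on a non-empty set `Ω ⊆ 𝕜` is the resolvent of a
unique linear relation `A ⊆ X × X` (with `Ω ⊆ ρ(A)`). -/
theorem stmt_6 {𝕜 X : Type*} [RCLike 𝕜] [NormedAddCommGroup X] [NormedSpace 𝕜 X]
    [CompleteSpace X]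
    (Ω : Set 𝕜) (hΩ : Ω.Nonempty) (R : 𝕜 → X →L[𝕜] X)
    (hR : ∀ l ∈ Ω, ∀ μ ∈ Ω, R l - R μ = (μ - l) • (R l ∘L R μ)) :
    ∃! A : Submodule 𝕜 (X × X), ∀ l ∈ Ω, IsResolventOf A l (R l) := by
  obtain ⟨l₀, hl₀⟩ := hΩ
  -- the linear map whose kernel is A
  set f : X × X →ₗ[𝕜] X :=
    LinearMap.fst 𝕜 X X - (R l₀ : X →ₗ[𝕜] X) ∘ₗ (l₀ • LinearMap.fst 𝕜 X X - LinearMap.snd 𝕜 X X)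
    with hf
  have hmem : ∀ x y : X, (x, y) ∈ LinearMap.ker f ↔ x = R l₀ (l₀ • x - y) := by
    intro x y
    simp only [LinearMap.mem_ker, hf, LinearMap.sub_apply, LinearMap.smul_apply,
      LinearMap.comp_apply, LinearMap.fst_apply, LinearMap.snd_apply,
      ContinuousLinearMap.coe_coe, sub_eq_zero]
  have hkey : ∀ l ∈ Ω, ∀ u x : X, (x = R l₀ ((l₀ - l) • x + u)) ↔ x = R l u := by
    intro l hl u x
    exact key_lemma l l₀ R (hR l hl l₀ hl₀) (hR l₀ hl₀ l hl) u x
  have hres : ∀ l ∈ Ω, IsResolventOf (LinearMap.ker f) l (R l) := by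
    intro l hl u x
    rw [← hkey l hl u x]
    constructor
    · rintro ⟨y, hy, rfl⟩
      rw [hmem] at hy
      rw [show (l₀ - l) • x + (l • x - y) = l₀ • x - y by module]
      exact hy
    · intro hx
      refine ⟨l • x - u, ?_, by abel⟩
      rw [hmem, show l₀ • x - (l • x - u) = (l₀ - l) • x + u by module]
      exact hx
  refine ⟨LinearMap.ker f, hres, ?_⟩
  intro A hA
  ext ⟨x, y⟩
  rw [hmem]
  have h := hA l₀ hl₀ (l₀ • x - y) x
  constructor
  · intro hxy
    exact h.mp ⟨y, hxy, rfl⟩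
  · intro hxy
    obtain ⟨y', hy', hy'eq⟩ := h.mpr hxy
    have : y = y' := sub_right_injective hy'eq
    exact this ▸ hy'
end

section
/- Let Aₙ ⊆ X × X be relations (n ∈ ℕ) and let A = lim Aₙ. Let λ ∈ 𝕂 be such that λ ∈ ρ(Aₙ) for all n and sup_{n∈ℕ} ‖R(λ,Aₙ)‖ < ∞. Then the following are equivalent: (i) ran(λ − A) is dense in X; (ii) the sequence (R(λ,Aₙ))ₙ converges strongly (i.e. R(λ,Aₙ)x converges in X for every x ∈ X). In that case λ ∈ ρ(A) and R(λ,A)x = lim_{n→∞} R(λ,Aₙ)x for all x ∈ X. -/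
open Filter Topology

/-- The limit `lim Aₙ` of a sequence of relations `Aₙ ⊆ X × X`:
all pairs `(x,y)` for which there exist `(xₙ,yₙ) ∈ Aₙ` with `xₙ → x`, `yₙ → y`. -/
def limRel {𝕜 X : Type*} [RCLike 𝕜] [NormedAddCommGroup X] [NormedSpace 𝕜 X]
    (A : ℕ → Submodule 𝕜 (X × X)) : Submodule 𝕜 (X × X) where
  carrier := {p | ∃ f : ℕ → X × X, (∀ n, f n ∈ A n) ∧ Tendsto f atTop (𝓝 p)}
  zero_mem' := ⟨fun _ => 0, fun n => (A n).zero_mem, tendsto_const_nhds⟩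
  add_mem' := by
    rintro p q ⟨f, hf, hf'⟩ ⟨g, hg, hg'⟩
    exact ⟨f + g, fun n => (A n).add_mem (hf n) (hg n), hf'.add hg'⟩
  smul_mem' := by
    rintro c p ⟨f, hf, hf'⟩
    exact ⟨c • f, fun n => (A n).smul_mem c (hf n), hf'.const_smul c⟩

/-- Trotter–Kato type theorem on the level of resolvents: let `Aₙ` be relations,
`A = lim Aₙ`, and `l ∈ ρ(Aₙ)` for all `n` with `sup ‖R(l,Aₙ)‖ < ∞`. Then
`ran(l - A)` is dense iff `(R(l,Aₙ))ₙ` converges strongly; in that case `l ∈ ρ(A)` and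
`R(l,A) = lim R(l,Aₙ)` strongly. -/
theorem stmt_8 {𝕜 X : Type*} [RCLike 𝕜] [NormedAddCommGroup X] [NormedSpace 𝕜 X]
    [CompleteSpace X]
    (A : ℕ → Submodule 𝕜 (X × X)) (l : 𝕜) (R : ℕ → X →L[𝕜] X)
    (hR : ∀ n, IsResolventOf (A n) l (R n))
    (C : ℝ) (hC : ∀ n, ‖R n‖ ≤ C) :
    (Dense {u : X | ∃ p ∈ limRel A, u = l • p.1 - p.2} ↔
        ∀ x : X, ∃ y : X, Tendsto (fun n => R n x) atTop (𝓝 y)) ∧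
    ((∀ x : X, ∃ y : X, Tendsto (fun n => R n x) atTop (𝓝 y)) →
        ∃ Q : X →L[𝕜] X, IsResolventOf (limRel A) l Q ∧
          ∀ x : X, Tendsto (fun n => R n x) atTop (𝓝 (Q x))) := by

  have hC0 : (0:ℝ) ≤ C := le_trans (norm_nonneg _) (hC 0)
  -- For each n and u, the pair (R n u, l • R n u - u) belongs to A n.
  have hmem : ∀ n u, ((R n u, l • R n u - u) : X × X) ∈ A n := by
    intro n u
    obtain ⟨y, hy, hu⟩ := (hR n u (R n u)).mpr rfl
    set x := R n u with hx
    have hyy : l • x - u = y := by rw [hu, sub_sub_cancel]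
    rwa [hyy]
  -- Convergence of resolvents on the range of l - limRel A.
  have hconv : ∀ u x y, ((x, y) : X × X) ∈ limRel A → u = l • x - y →
      Tendsto (fun n => R n u) atTop (𝓝 x) := by
    intro u x y hxy hu
    obtain ⟨f, hf, hft⟩ := hxy
    have h1 : Tendsto (fun n => (f n).1) atTop (𝓝 x) := (continuous_fst.tendsto _).comp hft
    have h2 : Tendsto (fun n => (f n).2) atTop (𝓝 y) := (continuous_snd.tendsto _).comp hft
    have hRn : ∀ n, (f n).1 = R n (l • (f n).1 - (f n).2) := by
      intro n
      exact (hR n _ _).mp ⟨(f n).2, by simpa using hf n, rfl⟩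
    have hun : Tendsto (fun n => l • (f n).1 - (f n).2) atTop (𝓝 u) := by
      rw [hu]; exact (h1.const_smul l).sub h2
    have key : ∀ n, ‖R n u - x‖ ≤ C * ‖u - (l • (f n).1 - (f n).2)‖ + ‖(f n).1 - x‖ := by
      intro n
      have heq : R n u - x = R n (u - (l • (f n).1 - (f n).2)) + ((f n).1 - x) := by
        rw [map_sub, ← hRn n]; abel
      rw [heq]
      refine (norm_add_le _ _).trans (add_le_add ?_ le_rfl)
      exact (R n).le_of_opNorm_le (hC n) _
    have hlim0 : Tendsto (fun n => C * ‖u - (l • (f n).1 - (f n).2)‖ + ‖(f n).1 - x‖)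
        atTop (𝓝 0) := by
      have hcu : Tendsto (fun _ : ℕ => u) atTop (𝓝 u) := tendsto_const_nhds
      have := ((hcu.sub hun).norm.const_mul C).add (h1.sub_const x).norm
      simpa using this
    have := squeeze_zero (fun n => norm_nonneg _) key hlim0
    exact tendsto_iff_norm_sub_tendsto_zero.mpr this
  -- Part 2: strong convergence gives the limit resolvent.
  have part2 : (∀ x : X, ∃ y : X, Tendsto (fun n => R n x) atTop (𝓝 y)) →
      ∃ Q : X →L[𝕜] X, IsResolventOf (limRel A) l Q ∧
        ∀ x : X, Tendsto (fun n => R n x) atTop (𝓝 (Q x)) := by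
    intro h
    choose q hq using h
    have hqadd : ∀ u v, q (u + v) = q u + q v := fun u v =>
      tendsto_nhds_unique (hq (u + v)) (by simpa [map_add] using (hq u).add (hq v))
    have hqsmul : ∀ (c : 𝕜) u, q (c • u) = c • q u := fun c u =>
      tendsto_nhds_unique (hq (c • u)) (by simpa [map_smul] using (hq u).const_smul c)
    let Qlin : X →ₗ[𝕜] X :=
      { toFun := q, map_add' := hqadd, map_smul' := hqsmul }
    have hbound : ∀ u, ‖Qlin u‖ ≤ C * ‖u‖ := fun u =>
      le_of_tendsto (hq u).norm
        (Filter.Eventually.of_forall fun n => (R n).le_of_opNorm_le (hC n) u)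
    refine ⟨Qlin.mkContinuous C hbound, ?_, hq⟩
    intro u x
    constructor
    · rintro ⟨y, hy, hu⟩
      exact tendsto_nhds_unique (hconv u x y hy hu) (hq u)
    · rintro rfl
      refine ⟨l • q u - u, ?_, by show u = l • q u - (l • q u - u); abel⟩
      refine ⟨fun n => (R n u, l • R n u - u), fun n => hmem n u, ?_⟩
      exact (hq u).prodMk_nhds (((hq u).const_smul l).sub tendsto_const_nhds)
  refine ⟨⟨?_, fun h => ?_⟩, part2⟩
  · -- density implies strong convergence
    intro hd x
    refine cauchySeq_tendsto_of_complete (Metric.cauchySeq_iff.mpr fun ε hε => ?_)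
    have hpos : 0 < ε / (3 * (C + 1)) := by positivity
    obtain ⟨v, hdv, hv⟩ := Metric.dense_iff.mp hd x _ hpos
    obtain ⟨p, hp, hvp⟩ := hv
    have hcv : CauchySeq (fun n => R n v) := (hconv v p.1 p.2 hp hvp).cauchySeq
    obtain ⟨N, hN⟩ := Metric.cauchySeq_iff.mp hcv (ε / 3) (by positivity)
    refine ⟨N, fun m hm n hn => ?_⟩
    have hxv : dist x v < ε / (3 * (C + 1)) := by
      rw [dist_comm]; exact Metric.mem_ball.mp hdv
    have hb : ∀ k, dist (R k x) (R k v) ≤ C * dist x v := by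
      intro k
      rw [dist_eq_norm, dist_eq_norm, ← map_sub]
      exact (R k).le_of_opNorm_le (hC k) _
    have hd' : dist x v * (3 * (C + 1)) < ε := (lt_div_iff₀ (by positivity)).mp hxv
    have hsmall : C * dist x v ≤ ε / 3 := by
      nlinarith [hd', (dist_nonneg : (0:ℝ) ≤ dist x v)]
    have t4 : dist (R m x) (R n x) ≤
        dist (R m x) (R m v) + dist (R m v) (R n v) + dist (R n v) (R n x) :=
      dist_triangle4 _ _ _ _
    have h3 : dist (R n v) (R n x) = dist (R n x) (R n v) := dist_comm _ _
    have hbm := hb m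
    have hbn := hb n
    have hmn := hN m hm n hn
    rw [h3] at t4
    linarith
  · -- strong convergence implies density
    obtain ⟨Q, hQ, _⟩ := part2 h
    have hall : ∀ u : X, u ∈ {u : X | ∃ p ∈ limRel A, u = l • p.1 - p.2} := by
      intro u
      obtain ⟨y, hy, hu⟩ := (hQ u (Q u)).mpr rfl
      exact ⟨(Q u, y), hy, hu⟩
    rw [Set.eq_univ_of_forall hall]
    exact dense_univ
end

section
/- Let X be a Banach space over 𝕂 = ℝ or ℂ and A ⊆ X × X a relation. Then A is dissipative if and only if for every (x,y) ∈ A there exists x' ∈ X' with ‖x'‖ ≤ 1, x'(x) = ‖x‖, and Re x'(y) ≤ 0. -/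
/-!
For `(x, y) ∈ A`, dissipativity says `‖x‖ ≤ ‖x - c • y‖` for all real `c ≥ 0`: the open ball of
radius `‖x‖` misses the segment `[x, x - y]`. A real functional separating the two (geometric
Hahn–Banach) is, after rescaling, a norming functional of `x` that is nonpositive at `y`, and its
`𝕜`-linear extension keeps both properties. Conversely such an `x'` gives
`‖x‖ = Re x'(x) ≤ Re x'(x - c • y) ≤ ‖x - c • y‖`.
-/

/-- A relation `A ⊆ X × X` is dissipative if `‖lx‖ ≤ ‖lx - y‖` for all `(x,y) ∈ A`
and all real `l > 0`. -/
def Dissipative {𝕜 X : Type*} [RCLike 𝕜] [NormedAddCommGroup X] [NormedSpace 𝕜 X]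
    (A : Submodule 𝕜 (X × X)) : Prop :=
  ∀ p ∈ A, ∀ l : ℝ, 0 < l → ‖(l : 𝕜) • p.1‖ ≤ ‖(l : 𝕜) • p.1 - p.2‖

open Metric RCLike

theorem exists_dual_nonpos_of_forall_mem_segment_norm_le {E : Type*} [NormedAddCommGroup E]
    [NormedSpace ℝ E] {x y : E} (h : ∀ z ∈ segment ℝ x (x - y), ‖x‖ ≤ ‖z‖) :
    ∃ f : StrongDual ℝ E, ‖f‖ ≤ 1 ∧ f x = ‖x‖ ∧ f y ≤ 0 := by
  rcases (norm_nonneg x).eq_or_lt with hx | hx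
  · exact ⟨0, by simp, by simp [← hx], le_rfl⟩
  have disj : Disjoint (ball (0 : E) ‖x‖) (segment ℝ x (x - y)) :=
    Set.disjoint_left.2 fun z hz hzs => (h z hzs).not_gt (mem_ball_zero_iff.1 hz)
  obtain ⟨f, u, hball, hseg⟩ :=
    geometric_hahn_banach_open (convex_ball 0 _) isOpen_ball (convex_segment _ _) disj
  have hu : 0 < u := by simpa using hball 0 (mem_ball_self hx)
  have hpolar : u⁻¹ • f ∈ StrongDual.polar ℝ (ball (0 : E) ‖x‖) := by
    refine (StrongDual.mem_polar_iff ℝ _).2 fun z hz => ?_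
    have hfz : f z < u := hball z hz
    have hfnz : f (-z) < u := hball (-z) (by simpa using hz)
    rw [map_neg] at hfnz
    rw [smul_apply, smul_eq_mul, norm_mul, norm_inv, Real.norm_of_nonneg hu.le,
      inv_mul_le_one₀ hu, Real.norm_eq_abs, abs_le]
    constructor <;> linarith
  have hf : ‖f‖ ≤ u / ‖x‖ := by
    rw [NormedSpace.polar_ball (𝕜 := ℝ) (E := E) hx, mem_closedBall_zero_iff, norm_smul,
      norm_inv, Real.norm_of_nonneg hu.le, inv_mul_le_iff₀ hu] at hpolar
    rwa [div_eq_mul_inv]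
  have hfx : f x = u := by
    refine le_antisymm ?_ (hseg x (left_mem_segment _ _ _))
    calc f x ≤ ‖f‖ * ‖x‖ := (le_abs_self _).trans (f.le_opNorm x)
      _ ≤ u := by rwa [← le_div_iff₀ hx]
  have hfy : f y ≤ 0 := by
    have := hseg (x - y) (right_mem_segment _ _ _)
    rw [map_sub] at this
    linarith
  refine ⟨(‖x‖ / u) • f, ?_, ?_, ?_⟩
  · rw [norm_smul, Real.norm_of_nonneg (by positivity)]
    calc ‖x‖ / u * ‖f‖ ≤ ‖x‖ / u * (u / ‖x‖) := by gcongr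
      _ = 1 := by field_simp
  · simp [hfx, hu.ne']
  · simpa using mul_nonpos_of_nonneg_of_nonpos (by positivity : 0 ≤ ‖x‖ / u) hfy

section RCLike

variable {𝕜 X : Type*} [RCLike 𝕜] [NormedAddCommGroup X] [NormedSpace 𝕜 X]

theorem exists_dual_re_nonpos_of_norm_le_norm_sub_smul {x y : X}
    (h : ∀ c ∈ Set.Icc (0 : ℝ) 1, ‖x‖ ≤ ‖x - (c : 𝕜) • y‖) :
    ∃ x' : StrongDual 𝕜 X, ‖x'‖ ≤ 1 ∧ x' x = ‖x‖ ∧ re (x' y) ≤ 0 := by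
  let : NormedSpace ℝ X := .restrictScalars ℝ 𝕜 X
  have : IsScalarTower ℝ 𝕜 X := .restrictScalars ℝ 𝕜 X
  have hseg : ∀ z ∈ segment ℝ x (x - y), ‖x‖ ≤ ‖z‖ := by
    rw [segment_eq_image']
    rintro _ ⟨c, hc, rfl⟩
    simpa only [sub_sub_cancel_left, smul_neg, ← sub_eq_add_neg, real_smul_eq_coe_smul (K := 𝕜)]
      using h c hc
  obtain ⟨f, hf1, hfx, hfy⟩ := exists_dual_nonpos_of_forall_mem_segment_norm_le hseg
  set g : StrongDual 𝕜 X := f.extendRCLike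
  have hg1 : ‖g‖ ≤ 1 := by rwa [StrongDual.norm_extendRCLike]
  have hre : re (g x) = ‖x‖ := by simpa [g] using hfx
  have hnorm : ‖g x‖ ≤ re (g x) := by
    simpa [hre] using g.le_of_opNorm_le hg1 x
  refine ⟨g, hg1, ?_, by simpa [g] using hfy⟩
  rw [← re_eq_self_of_le hnorm, hre]

theorem norm_le_norm_sub_of_re_nonpos {x y : X} {x' : StrongDual 𝕜 X} (h1 : ‖x'‖ ≤ 1)
    (hx : x' x = ‖x‖) (hy : re (x' y) ≤ 0) : ‖x‖ ≤ ‖x - y‖ :=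
  calc ‖x‖ ≤ re (x' x) - re (x' y) := by simp [hx, hy]
    _ = re (x' (x - y)) := by simp
    _ ≤ ‖x' (x - y)‖ := re_le_norm _
    _ ≤ ‖x - y‖ := by simpa using x'.le_of_opNorm_le h1 (x - y)

theorem norm_smul_le_norm_smul_sub_iff {x y : X} {l : ℝ} (hl : 0 < l) :
    ‖(l : 𝕜) • x‖ ≤ ‖(l : 𝕜) • x - y‖ ↔ ‖x‖ ≤ ‖x - ((l⁻¹ : ℝ) : 𝕜) • y‖ := by
  have hl' : (l : 𝕜) ≠ 0 := ofReal_ne_zero.2 hl.ne'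
  rw [show (l : 𝕜) • x - y = (l : 𝕜) • (x - ((l⁻¹ : ℝ) : 𝕜) • y) by
      rw [smul_sub, ofReal_inv, smul_inv_smul₀ hl'],
    norm_smul, norm_smul, norm_ofReal, abs_of_pos hl, mul_le_mul_iff_right₀ hl]

theorem dissipative_iff_norm_le_norm_sub_smul (A : Submodule 𝕜 (X × X)) :
    Dissipative A ↔ ∀ p ∈ A, ∀ c : ℝ, 0 ≤ c → ‖p.1‖ ≤ ‖p.1 - (c : 𝕜) • p.2‖ := by
  refine forall₂_congr fun p _ => ⟨fun h c hc => ?_, fun h l hl => ?_⟩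
  · rcases hc.eq_or_lt with rfl | hc
    · simp
    · simpa using (norm_smul_le_norm_smul_sub_iff (inv_pos.2 hc)).1 (h _ (inv_pos.2 hc))
  · exact (norm_smul_le_norm_smul_sub_iff hl).2 (h _ (inv_nonneg.2 hl.le))

end RCLike

theorem stmt_9_general {𝕜 X : Type*} [RCLike 𝕜] [NormedAddCommGroup X] [NormedSpace 𝕜 X]
    (A : Submodule 𝕜 (X × X)) :
    Dissipative A ↔
      ∀ p ∈ A, ∃ x' : X →L[𝕜] 𝕜,
        ‖x'‖ ≤ 1 ∧ x' p.1 = (‖p.1‖ : 𝕜) ∧ RCLike.re (x' p.2) ≤ 0 := by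
  rw [dissipative_iff_norm_le_norm_sub_smul]
  refine forall₂_congr fun p _ => ⟨fun h => exists_dual_re_nonpos_of_norm_le_norm_sub_smul
    fun c hc => h c hc.1, ?_⟩
  rintro ⟨x', h1, hx, hy⟩ c hc
  refine norm_le_norm_sub_of_re_nonpos h1 hx ?_
  simpa [re_ofReal_mul] using mul_nonpos_of_nonneg_of_nonpos hc hy

/-- A relation `A` is dissipative iff for every `(x,y) ∈ A` there is `x'` in the duality
map of `x` (i.e. `‖x'‖ ≤ 1` and `x'(x) = ‖x‖`) with `Re x'(y) ≤ 0`. -/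
theorem stmt_9 {𝕜 X : Type*} [RCLike 𝕜] [NormedAddCommGroup X] [NormedSpace 𝕜 X]
    [CompleteSpace X] (A : Submodule 𝕜 (X × X)) :
    Dissipative A ↔
      ∀ p ∈ A, ∃ x' : X →L[𝕜] 𝕜,
        ‖x'‖ ≤ 1 ∧ x' p.1 = (‖p.1‖ : 𝕜) ∧ RCLike.re (x' p.2) ≤ 0 :=
  stmt_9_general A
end

section
/- (Lumer–Phillips theorem, surjectivity version.) Let X be a Banach space and A ⊆ X × X a dissipative relation with ran A = X. Then A is m-dissipative and 0 ∈ ρ(A); in particular A is closed and (0,∞) ⊆ ρ(A). -/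
open Filter Topology

/-- Helper: a vector whose norm is bounded by `l * c` for all positive `l` is zero. -/
lemma lp_eq_zero_of_forall {X : Type*} [NormedAddCommGroup X] {x : X} {c : ℝ}
    (h : ∀ l : ℝ, 0 < l → ‖x‖ ≤ l * c) : x = 0 := by
  rw [← norm_le_zero_iff]
  refine le_of_forall_pos_le_add fun ε hε => ?_
  have hl : 0 < ε / (|c| + 1) := by positivity
  have h1 := h _ hl
  have hc : (0:ℝ) < |c| + 1 := by positivity
  have h2 : ε / (|c| + 1) * c ≤ ε / (|c| + 1) * (|c| + 1) := by
    have := le_abs_self c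
    nlinarith
  have h3 : ε / (|c| + 1) * (|c| + 1) = ε := by field_simp
  linarith

/-- Lumer–Phillips theorem, surjectivity version: a dissipative relation `A` with
`ran A = X` is m-dissipative and `0 ∈ ρ(A)`; in particular `A` is closed and
`(0,∞) ⊆ ρ(A)`. -/
theorem stmt_11 {𝕜 X : Type*} [RCLike 𝕜] [NormedAddCommGroup X] [NormedSpace 𝕜 X]
    [CompleteSpace X] (A : Submodule 𝕜 (X × X))
    (hdiss : Dissipative A) (hsurj : ∀ y : X, ∃ x, (x, y) ∈ A) :
    -- A is m-dissipative: dissipative and ran(l - A) = X for some l > 0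
    (∃ l : ℝ, 0 < l ∧ ∀ v : X, ∃ p ∈ A, v = (l : 𝕜) • p.1 - p.2) ∧
    -- 0 ∈ ρ(A)
    (∃ Q : X →L[𝕜] X, IsResolventOf A (0 : 𝕜) Q) ∧
    -- A is closed
    IsClosed (A : Set (X × X)) ∧
    -- (0,∞) ⊆ ρ(A)
    (∀ l : ℝ, 0 < l → ∃ Q : X →L[𝕜] X, IsResolventOf A (l : 𝕜) Q) := by
  classical
  have nsmul : ∀ (l : ℝ) (v : X), ‖(l : 𝕜) • v‖ = |l| * ‖v‖ := fun l v => by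
    rw [norm_smul, RCLike.norm_ofReal]
  -- Step 1: single-valuedness of A⁻¹
  have huniq : ∀ x : X, (x, (0:X)) ∈ A → x = 0 := by
    intro x hx
    obtain ⟨u, hu⟩ := hsurj x
    refine lp_eq_zero_of_forall (c := 2 * ‖u‖) fun l hl => ?_
    have hmem : (x + (l:𝕜) • u, (l:𝕜) • x) ∈ A := by
      have := A.add_mem hx (A.smul_mem ((l:𝕜)) hu)
      simpa using this
    have hd := hdiss _ hmem l hl
    have he : (l:𝕜) • (x + (l:𝕜) • u) - (l:𝕜) • x = (l:𝕜) • ((l:𝕜) • u) := by module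
    rw [he] at hd
    rw [nsmul, nsmul, nsmul, abs_of_pos hl] at hd
    have hd' : l * ‖x + (l:𝕜) • u‖ ≤ l * (l * ‖u‖) := hd
    have h1 : ‖x + (l:𝕜) • u‖ ≤ l * ‖u‖ := le_of_mul_le_mul_left hd' hl
    have h2 : ‖x‖ ≤ ‖x + (l:𝕜) • u‖ + ‖(l:𝕜) • u‖ := by
      have := norm_add_le (x + (l:𝕜) • u) (-((l:𝕜) • u))
      simpa using this
    rw [nsmul, abs_of_pos hl] at h2
    nlinarith
  have huniq2 : ∀ x x' y : X, (x, y) ∈ A → (x', y) ∈ A → x = x' := by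
    intro x x' y h1 h2
    have h3 : (x - x', (0:X)) ∈ A := by
      have := A.sub_mem h1 h2
      simpa using this
    have := huniq _ h3
    rwa [sub_eq_zero] at this
  -- Step 2: B = A⁻¹ as a linear map
  let Bfun : X → X := fun y => (hsurj y).choose
  have hBf : ∀ y, (Bfun y, y) ∈ A := fun y => (hsurj y).choose_spec
  have hBfeq : ∀ x y, (x, y) ∈ A → x = Bfun y := fun x y h => huniq2 x (Bfun y) y h (hBf y)
  let B : X →ₗ[𝕜] X :=
    { toFun := Bfun
      map_add' := fun y z => by
        refine (hBfeq _ _ ?_).symm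
        simpa using A.add_mem (hBf y) (hBf z)
      map_smul' := fun c y => by
        refine (hBfeq _ _ ?_).symm
        simpa using A.smul_mem c (hBf y) }
  have hB : ∀ y, (B y, y) ∈ A := hBf
  have hBeq : ∀ x y, (x, y) ∈ A → x = B y := hBfeq
  -- Step 3: B is continuous (closed graph theorem)
  have hBcont : Continuous B := by
    refine B.continuous_of_seq_closed_graph fun u x y htu htBu => ?_
    set w : X := y - B x with hw
    have hw0 : w = 0 := by
      refine lp_eq_zero_of_forall (c := 2 * ‖B w‖) fun l hl => ?_
      have hmem : ∀ n, (B (u n) - B x + (l:𝕜) • B w, u n - x + (l:𝕜) • w) ∈ A := by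
        intro n
        simpa using A.add_mem (A.sub_mem (hB (u n)) (hB x)) (A.smul_mem ((l:𝕜)) (hB w))
      have hdn : ∀ n, ‖(l:𝕜) • (B (u n) - B x + (l:𝕜) • B w)‖ ≤
          ‖(l:𝕜) • (B (u n) - B x + (l:𝕜) • B w) - (u n - x + (l:𝕜) • w)‖ :=
        fun n => hdiss _ (hmem n) l hl
      have t1 : Tendsto (fun n => B (u n) - B x + (l:𝕜) • B w) atTop
          (𝓝 (y - B x + (l:𝕜) • B w)) :=
        (htBu.sub tendsto_const_nhds).add tendsto_const_nhds
      have t2 : Tendsto (fun n => u n - x + (l:𝕜) • w) atTop (𝓝 (x - x + (l:𝕜) • w)) :=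
        (htu.sub tendsto_const_nhds).add tendsto_const_nhds
      have key : ‖(l:𝕜) • (w + (l:𝕜) • B w)‖ ≤ ‖(l:𝕜) • ((l:𝕜) • B w)‖ := by
        have e1 : (l:𝕜) • (y - B x + (l:𝕜) • B w) = (l:𝕜) • (w + (l:𝕜) • B w) := by
          rw [hw]
        have e2 : (l:𝕜) • (y - B x + (l:𝕜) • B w) - (x - x + (l:𝕜) • w)
            = (l:𝕜) • ((l:𝕜) • B w) + ((l:𝕜) • (y - B x) - (l:𝕜) • w) := by module
        have e3 : (l:𝕜) • (y - B x) - (l:𝕜) • w = 0 := by rw [hw, sub_self]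
        have ta : Tendsto (fun n => ‖(l:𝕜) • (B (u n) - B x + (l:𝕜) • B w)‖) atTop
            (𝓝 ‖(l:𝕜) • (w + (l:𝕜) • B w)‖) := by
          have := (t1.const_smul ((l:𝕜))).norm
          rwa [e1] at this
        have tb : Tendsto (fun n => ‖(l:𝕜) • (B (u n) - B x + (l:𝕜) • B w)
            - (u n - x + (l:𝕜) • w)‖) atTop (𝓝 ‖(l:𝕜) • ((l:𝕜) • B w)‖) := by
          have := ((t1.const_smul ((l:𝕜))).sub t2).norm
          rwa [e2, e3, add_zero] at this
        exact le_of_tendsto_of_tendsto' ta tb hdn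
      simp only [nsmul, abs_of_pos hl] at key
      have h1 : ‖w + (l:𝕜) • B w‖ ≤ l * ‖B w‖ := le_of_mul_le_mul_left key hl
      have h2 : ‖w‖ ≤ ‖w + (l:𝕜) • B w‖ + ‖(l:𝕜) • B w‖ := by
        have := norm_add_le (w + (l:𝕜) • B w) (-((l:𝕜) • B w))
        simpa using this
      rw [nsmul, abs_of_pos hl] at h2
      nlinarith
    have : y - B x = 0 := hw0
    rw [sub_eq_zero] at this
    exact this
  let Bc : X →L[𝕜] X := ⟨B, hBcont⟩
  -- reformulation of the resolvent condition
  have hmem_iff : ∀ (l : 𝕜) (u x : X),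
      (∃ y, (x, y) ∈ A ∧ u = l • x - y) ↔ (x, l • x - u) ∈ A := by
    intro l u x
    constructor
    · rintro ⟨y, hy, rfl⟩
      simpa using hy
    · intro h
      exact ⟨l • x - u, h, by abel⟩
  -- resolvent at 0
  have hQ0 : IsResolventOf A (0 : 𝕜) (-Bc) := by
    intro u x
    rw [hmem_iff]
    rw [zero_smul, zero_sub]
    constructor
    · intro h
      have := hBeq _ _ h
      rw [this, map_neg]
      rfl
    · intro h
      have hx : x = -(B u) := h
      rw [hx]
      simpa using A.neg_mem (hB u)
  -- A is closed
  have hclosed : IsClosed (A : Set (X × X)) := by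
    have hset : (A : Set (X × X)) = {p : X × X | p.1 = B p.2} := by
      ext p
      constructor
      · intro hp
        exact hBeq p.1 p.2 hp
      · intro hp
        have h1 : (B p.2, p.2) ∈ A := hB p.2
        have h2 : (p.1, p.2) ∈ A := by rw [hp]; exact h1
        exact h2
    rw [hset]
    exact isClosed_eq continuous_fst (hBcont.comp continuous_snd)
  -- invertibility of 1 - T for small T
  have hUnitIff : ∀ (T : X →L[𝕜] X) (hT : ‖T‖ < 1) (v x : X),
      x - T x = v ↔ x = (↑(Units.oneSub T hT)⁻¹ : X →L[𝕜] X) v := by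
    intro T hT v x
    have hval : ∀ z : X, (↑(Units.oneSub T hT) : X →L[𝕜] X) z = z - T z := fun z => by
      rw [Units.val_oneSub, ContinuousLinearMap.sub_apply, ContinuousLinearMap.one_apply]
    constructor
    · rintro rfl
      rw [← hval x, ← ContinuousLinearMap.mul_apply, Units.inv_mul,
        ContinuousLinearMap.one_apply]
    · rintro rfl
      rw [← hval, ← ContinuousLinearMap.mul_apply, Units.mul_inv, ContinuousLinearMap.one_apply]
  -- shifting the resolvent
  have hshift : ∀ (l μ : ℝ) (Q : X →L[𝕜] X), IsResolventOf A ((l : ℝ) : 𝕜) Q →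
      |l - μ| * ‖Q‖ < 1 → ∃ Q' : X →L[𝕜] X, IsResolventOf A ((μ : ℝ) : 𝕜) Q' := by
    intro l μ Q hQ hsmall
    set c : 𝕜 := ((l : ℝ) : 𝕜) - ((μ : ℝ) : 𝕜) with hc
    set T : X →L[𝕜] X := c • Q with hTdef
    have hTnorm : ‖T‖ < 1 := by
      have h1 : ‖T‖ ≤ ‖c‖ * ‖Q‖ := ContinuousLinearMap.opNorm_smul_le c Q
      have h2 : ‖c‖ = |l - μ| := by
        rw [hc, ← RCLike.ofReal_sub, RCLike.norm_ofReal]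
      rw [h2] at h1
      exact lt_of_le_of_lt h1 hsmall
    refine ⟨(↑(Units.oneSub T hTnorm)⁻¹ : X →L[𝕜] X).comp Q, fun u x => ?_⟩
    rw [hmem_iff]
    have e1 : ((μ : ℝ) : 𝕜) • x - u = ((l : ℝ) : 𝕜) • x - (u + c • x) := by
      rw [hc]; module
    rw [e1]
    have step1 : (x, ((l : ℝ) : 𝕜) • x - (u + c • x)) ∈ A ↔ x = Q (u + c • x) :=
      (hmem_iff _ _ _).symm.trans (hQ (u + c • x) x)
    rw [step1]
    have step2 : Q (u + c • x) = Q u + T x := by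
      rw [map_add, map_smul, hTdef, ContinuousLinearMap.smul_apply]
    rw [step2]
    have step3 : (x = Q u + T x) ↔ x - T x = Q u := sub_eq_iff_eq_add.symm
    rw [step3, hUnitIff T hTnorm (Q u) x]
    rfl
  -- resolvent norm bound
  have hbound : ∀ (l : ℝ) (Q : X →L[𝕜] X), 0 < l → IsResolventOf A ((l : ℝ) : 𝕜) Q →
      ‖Q‖ ≤ 1 / l := by
    intro l Q hl hQ
    refine ContinuousLinearMap.opNorm_le_bound _ (by positivity) fun u => ?_
    obtain ⟨y, hy, hu⟩ := (hQ u (Q u)).mpr rfl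
    have hd := hdiss _ hy l hl
    simp only at hd
    rw [← hu] at hd
    rw [nsmul, abs_of_pos hl] at hd
    rw [div_mul_eq_mul_div, le_div_iff₀ hl]
    nlinarith
  -- the set of good l contains all positive reals
  have h0' : IsResolventOf A (((0:ℝ)) : 𝕜) (-Bc) := by
    have h : (((0:ℝ)) : 𝕜) = (0 : 𝕜) := by norm_num
    rw [h]
    exact hQ0
  set μ₀ : ℝ := 1 / (‖Bc‖ + 1) with hμ₀
  have hμ₀pos : 0 < μ₀ := by positivity
  have hbase : ∃ Q : X →L[𝕜] X, IsResolventOf A ((μ₀ : ℝ) : 𝕜) Q := by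
    refine hshift 0 μ₀ (-Bc) h0' ?_
    rw [norm_neg]
    have h1 : |0 - μ₀| = μ₀ := by rw [zero_sub, abs_neg, abs_of_pos hμ₀pos]
    rw [h1, hμ₀]
    have hBc : (0:ℝ) ≤ ‖Bc‖ := norm_nonneg _
    rw [div_mul_eq_mul_div, one_mul, div_lt_one (by linarith)]
    linarith
  have hstep : ∀ l : ℝ, 0 < l → (∃ Q : X →L[𝕜] X, IsResolventOf A ((l : ℝ) : 𝕜) Q) →
      ∀ μ : ℝ, 0 < μ → μ < 2 * l → ∃ Q : X →L[𝕜] X, IsResolventOf A ((μ : ℝ) : 𝕜) Q := by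
    rintro l hl ⟨Q, hQ⟩ μ hμ hμ2
    refine hshift l μ Q hQ ?_
    have hb := hbound l Q hl hQ
    have h1 : |l - μ| < l := abs_lt.2 ⟨by linarith, by linarith⟩
    calc |l - μ| * ‖Q‖ ≤ |l - μ| * (1 / l) :=
          mul_le_mul_of_nonneg_left hb (abs_nonneg _)
      _ < 1 := by rw [mul_one_div, div_lt_one hl]; exact h1
  have hgeo : ∀ n : ℕ, ∃ Q : X →L[𝕜] X, IsResolventOf A ((((3/2:ℝ)^n * μ₀ : ℝ)) : 𝕜) Q := by
    intro n
    induction n with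
    | zero => simpa using hbase
    | succ n ih =>
      have hpos : (0:ℝ) < (3/2:ℝ)^n * μ₀ := by positivity
      refine hstep _ hpos ih _ (by positivity) ?_
      rw [pow_succ]
      nlinarith
  have hall : ∀ l : ℝ, 0 < l → ∃ Q : X →L[𝕜] X, IsResolventOf A ((l : ℝ) : 𝕜) Q := by
    intro l hl
    obtain ⟨n, hn⟩ := pow_unbounded_of_one_lt (l / μ₀) (by norm_num : (1:ℝ) < 3/2)
    have hlt : l < (3/2:ℝ)^n * μ₀ := by
      rw [div_lt_iff₀ hμ₀pos] at hn
      nlinarith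
    exact hstep _ (by positivity) (hgeo n) l hl (by nlinarith)
  -- assembly
  obtain ⟨Q1, hQ1⟩ := hall 1 one_pos
  refine ⟨⟨1, one_pos, fun v => ?_⟩, ⟨-Bc, hQ0⟩, hclosed, hall⟩
  obtain ⟨y, hy, hv⟩ := (hQ1 v (Q1 v)).mpr rfl
  exact ⟨(Q1 v, y), hy, hv⟩
end

section
/- Let X be a Banach space and A an m-dissipative relation on X. If u ∈ ker A with u ≠ 0, then there exists u' ∈ ker A' such that u'(u) ≠ 0. -/
/-!
Dissipativity applied to `(x, y) + l⁻¹ • (u, 0) ∈ A` gives `‖u + l • x‖ ≤ ‖u + l • x - y‖`;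
letting `l → 0⁺` shows `‖u‖ ≤ ‖u - y‖` on `ran A`, hence on its closure, so `u ∉ closure (ran A)`.
Hahn–Banach then yields a functional vanishing on `ran A`, i.e. an element of `ker A'`, that does
not vanish at `u`.
-/

open Filter Topology

/-- Membership in the adjoint relation `A' ⊆ X' × X'`:
`(y', x') ∈ A'` iff `x'(x) = y'(y)` for all `(x,y) ∈ A`. -/
def InAdjoint {𝕜 X : Type*} [RCLike 𝕜] [NormedAddCommGroup X] [NormedSpace 𝕜 X]
    (A : Submodule 𝕜 (X × X)) (y' : X →L[𝕜] 𝕜) (x' : X →L[𝕜] 𝕜) : Prop :=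
  ∀ p ∈ A, x' p.1 = y' p.2

namespace Submodule

variable {𝕜 X : Type*} [RCLike 𝕜] [NormedAddCommGroup X] [NormedSpace 𝕜 X]

theorem exists_dual_eq_zero_of_notMem_topologicalClosure {S : Submodule 𝕜 X} {u : X}
    (hu : u ∉ S.topologicalClosure) :
    ∃ f : StrongDual 𝕜 X, (∀ y ∈ S, f y = 0) ∧ f u ≠ 0 := by
  set T := S.topologicalClosure
  have : IsClosed (T : Set X) := S.isClosed_topologicalClosure
  have hker : ∀ x, T.mkQL x = 0 ↔ x ∈ T := fun x => by
    rw [coe_mkQL, mkQ_apply, Quotient.mk_eq_zero]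
  have hqu : T.mkQL u ≠ 0 := fun h => hu ((hker u).mp h)
  obtain ⟨g, hg⟩ := SeparatingDual.exists_ne_zero (R := 𝕜) hqu
  refine ⟨g.comp T.mkQL, fun y hy => ?_, hg⟩
  simp [(hker y).mpr (S.le_topologicalClosure hy)]

end Submodule

namespace Dissipative

variable {𝕜 X : Type*} [RCLike 𝕜] [NormedAddCommGroup X] [NormedSpace 𝕜 X]
  {A : Submodule 𝕜 (X × X)} {u : X}

theorem norm_le_norm_sub_snd (hA : Dissipative A) (hu : (u, (0 : X)) ∈ A) {p : X × X}
    (hp : p ∈ A) : ‖u‖ ≤ ‖u - p.2‖ := by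
  have hshift : ∀ l : ℝ, 0 < l → ‖u + (l : 𝕜) • p.1‖ ≤ ‖u + (l : 𝕜) • p.1 - p.2‖ := by
    intro l hl
    have hl' : (l : 𝕜) ≠ 0 := RCLike.ofReal_ne_zero.mpr hl.ne'
    have h := hA _ (A.add_mem hp (A.smul_mem (l : 𝕜)⁻¹ hu)) l hl
    simpa [smul_add, smul_smul, mul_inv_cancel₀ hl', add_comm] using h
  have hcont : Continuous fun l : ℝ => u + (l : 𝕜) • p.1 := by fun_prop
  have hlim : ∀ v : X, Tendsto (fun l : ℝ => ‖u + (l : 𝕜) • p.1 - v‖) (𝓝[>] 0) (𝓝 ‖u - v‖) :=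
    fun v => by
      simpa using ((hcont.sub continuous_const).norm.tendsto 0).mono_left nhdsWithin_le_nhds
  simpa using le_of_tendsto_of_tendsto (hlim 0) (hlim p.2)
    (eventually_nhdsWithin_of_forall fun l hl => by simpa using hshift l hl)

theorem notMem_topologicalClosure_range (hA : Dissipative A) (hu : (u, (0 : X)) ∈ A)
    (hu0 : u ≠ 0) : u ∉ (A.map (LinearMap.snd 𝕜 X X)).topologicalClosure := by
  intro hmem
  have hclosure : closure (A.map (LinearMap.snd 𝕜 X X) : Set X) ⊆ {y | ‖u‖ ≤ ‖u - y‖} := by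
    refine closure_minimal ?_ (isClosed_le continuous_const (by fun_prop))
    rintro _ ⟨p, hp, rfl⟩
    exact hA.norm_le_norm_sub_snd hu hp
  have hle : ‖u‖ ≤ ‖u - u‖ := hclosure hmem
  exact hu0 (norm_le_zero_iff.mp (by simpa using hle))

end Dissipative

theorem stmt_12_general {𝕜 X : Type*} [RCLike 𝕜] [NormedAddCommGroup X] [NormedSpace 𝕜 X]
    (A : Submodule 𝕜 (X × X))
    (hdiss : Dissipative A)
    (u : X) (hu : (u, (0 : X)) ∈ A) (hu0 : u ≠ 0) :
    ∃ u' : X →L[𝕜] 𝕜, InAdjoint A u' (0 : X →L[𝕜] 𝕜) ∧ u' u ≠ 0 := by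
  obtain ⟨f, hf_range, hfu⟩ := Submodule.exists_dual_eq_zero_of_notMem_topologicalClosure
    (hdiss.notMem_topologicalClosure_range hu hu0)
  refine ⟨f, fun p hp => ?_, hfu⟩
  simpa using (hf_range p.2 ⟨p, hp, rfl⟩).symm

/-- If `A` is an m-dissipative relation on `X` and `0 ≠ u ∈ ker A`, then there exists
`u' ∈ ker A'` with `u'(u) ≠ 0`. -/
theorem stmt_12 {𝕜 X : Type*} [RCLike 𝕜] [NormedAddCommGroup X] [NormedSpace 𝕜 X]
    [CompleteSpace X] (A : Submodule 𝕜 (X × X))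
    (hdiss : Dissipative A)
    (hm : ∃ l : ℝ, 0 < l ∧ ∀ v : X, ∃ p ∈ A, v = (l : 𝕜) • p.1 - p.2)
    (u : X) (hu : (u, (0 : X)) ∈ A) (hu0 : u ≠ 0) :
    ∃ u' : X →L[𝕜] 𝕜, InAdjoint A u' (0 : X →L[𝕜] 𝕜) ∧ u' u ≠ 0 :=
  stmt_12_general A hdiss u hu hu0
end
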